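/- Let p_1, p_2, … be i.i.d. random vectors uniformly distributed on the square [0,1]², and let Y_n denote the number of chain records of p_1,…,p_n. Then for every n ≥ 1, E[Y_n] = (H_n + 1)/2 and Var[Y_n] = (H_n + H_n^{(2)} − 2)/4. -/

import Mathlib

open MeasureTheory ProbabilityTheory Filter Asymptotics Real Set

noncomputable section

attribute [local instance] Classical.propDecidable

/-- `prec q p` means `q ≺ p`, i.e. `p` strictly dominates `q` in every coordinate. -/
def prec {d : ℕ} (q p : Fin d → ℝ) : Prop := ∀ i, q i < p i

/-- The `d`-dimensional simplex. -/
def simplex (d : ℕ) : Set (Fin d → ℝ) := {x | (∀ i, 0 ≤ x i) ∧ (∑ i, x i) ≤ 1}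

/-- The hypercube `[0,1]^d`. -/
def cube (d : ℕ) : Set (Fin d → ℝ) := Set.univ.pi fun _ => Set.Icc 0 1

/-- The uniform probability measure on a set `S ⊆ ℝ^d`. -/
def unif {d : ℕ} (S : Set (Fin d → ℝ)) : Measure (Fin d → ℝ) :=
  (volume S)⁻¹ • volume.restrict S

/-- The number of Pareto records among `q 0, …, q (n-1)`. -/
def paretoCount {d : ℕ} (q : ℕ → Fin d → ℝ) (n : ℕ) : ℕ :=
  ((Finset.range n).filter fun k => ∀ i < k, ¬ prec (q k) (q i)).card

/-- The number of maxima among `q 0, …, q (n-1)`. -/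
def maxCount {d : ℕ} (q : ℕ → Fin d → ℝ) (n : ℕ) : ℕ :=
  ((Finset.range n).filter fun k => ∀ i < n, i ≠ k → ¬ prec (q k) (q i)).card

/-- The index of the most recent chain record among `q 0, …, q k`. -/
def chainLead {d : ℕ} (q : ℕ → Fin d → ℝ) : ℕ → ℕ
  | 0 => 0
  | k + 1 => if prec (q (chainLead q k)) (q (k + 1)) then k + 1 else chainLead q k

/-- The number of chain records among `q 0, …, q (n-1)`:
`q 0` is a chain record, and `q k` is a chain record iff it dominates the most recent
chain record among `q 0, …, q (k-1)`. -/
def chainCount {d : ℕ} (q : ℕ → Fin d → ℝ) (n : ℕ) : ℕ :=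
  ((Finset.range n).filter fun k => chainLead q k = k).card

/-- The number of dominating records among `q 0, …, q (n-1)`. -/
def domCount {d : ℕ} (q : ℕ → Fin d → ℝ) (n : ℕ) : ℕ :=
  ((Finset.range n).filter fun k => ∀ i < k, prec (q i) (q k)).card

/-- The harmonic-type sum `H_n^{(a)} = ∑_{j=1}^n j^{-a}`. -/
def genH (a n : ℕ) : ℝ := ∑ j ∈ Finset.range n, (1 : ℝ) / (j + 1 : ℝ) ^ a

/-- The standard normal distribution function `Φ`. -/
def stdNormalCDF (x : ℝ) : ℝ := (gaussianReal 0 1 (Set.Iio x)).toReal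

/-!
Let `L_n` be the most recent chain record among the first `n` points and `A_n` the area of the
box `{w ∈ [0,1]² | L_n ≺ w}`. A fresh uniform point is a chain record with probability `A_n`, and
given that, it is uniform in this box, so the new box has area `A_n U V` with `U, V` independent
uniforms and `E[(UV)^r] = (r+1)⁻²`. Conditioning on the first `n` points therefore expresses
`E[h(Y_{n+1}) A_{n+1}^r]` through `E[h(Y_n + 1) A_n^{r+1}]`, `E[h(Y_n) A_n^r]` and
`E[h(Y_n) A_n^{r+1}]`. For `h = 1`, `h = id` and `h = (·)²` these are closed recursions for
`E[A_n^r]`, `E[Y_n A_n^r]` and `E[Y_n²]`, solved by explicit binomial and harmonic expressions.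
-/

section ChainRecords

variable {d : ℕ}

def chainLeader (q : ℕ → Fin d → ℝ) (n : ℕ) : Fin d → ℝ := q (chainLead q n)

lemma chainLead_le (q : ℕ → Fin d → ℝ) (n : ℕ) : chainLead q n ≤ n := by
  induction n with
  | zero => rfl
  | succ n ih =>
    rw [chainLead]
    split_ifs <;> omega

lemma chainLead_congr {q q' : ℕ → Fin d → ℝ} {n : ℕ} (h : ∀ i ≤ n, q i = q' i) :
    chainLead q n = chainLead q' n := by
  induction n with
  | zero => rfl
  | succ n ih =>
    have hn : chainLead q n = chainLead q' n := ih fun i hi => h i (by omega)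
    rw [chainLead, chainLead, hn, h _ (by have := chainLead_le q' n; omega), h (n + 1) le_rfl]

lemma chainLeader_congr {q q' : ℕ → Fin d → ℝ} {n : ℕ} (h : ∀ i ≤ n, q i = q' i) :
    chainLeader q n = chainLeader q' n := by
  rw [chainLeader, chainLeader, chainLead_congr h, h _ (chainLead_le q' n)]

lemma chainCount_succ (q : ℕ → Fin d → ℝ) (n : ℕ) :
    chainCount q (n + 1) = chainCount q n + if chainLead q n = n then 1 else 0 := by
  rw [chainCount, chainCount, Finset.range_add_one, Finset.filter_insert]
  split_ifs
  · exact Finset.card_insert_of_notMem (by simp)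
  · rfl

lemma chainCount_congr {q q' : ℕ → Fin d → ℝ} {n : ℕ} (h : ∀ i < n, q i = q' i) :
    chainCount q n = chainCount q' n := by
  induction n with
  | zero => rfl
  | succ n ih =>
    rw [chainCount_succ, chainCount_succ, ih fun i hi => h i (by omega),
      chainLead_congr fun i hi => h i (by omega)]

lemma chainCount_le (q : ℕ → Fin d → ℝ) (n : ℕ) : chainCount q n ≤ n :=
  (Finset.card_filter_le _ _).trans_eq (Finset.card_range n)

lemma chainCount_one (q : ℕ → Fin d → ℝ) : chainCount q 1 = 1 := rfl

lemma chainCount_add_two (q : ℕ → Fin d → ℝ) (n : ℕ) :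
    chainCount q (n + 2) =
      chainCount q (n + 1) + if prec (chainLeader q n) (q (n + 1)) then 1 else 0 := by
  rw [chainCount_succ q (n + 1), chainLead]
  have := chainLead_le q n
  unfold chainLeader
  split_ifs <;> omega

lemma chainLeader_succ (q : ℕ → Fin d → ℝ) (n : ℕ) :
    chainLeader q (n + 1) =
      if prec (chainLeader q n) (q (n + 1)) then q (n + 1) else chainLeader q n :=
  apply_ite q _ _ _

lemma measurableSet_prec : MeasurableSet {x : (Fin d → ℝ) × (Fin d → ℝ) | prec x.1 x.2} := by
  simp only [prec, Set.ofPred_forall]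
  exact MeasurableSet.iInter fun i => measurableSet_lt measurable_fst.eval measurable_snd.eval

lemma measurableSet_setOf_prec (L : Fin d → ℝ) : MeasurableSet {z : Fin d → ℝ | prec L z} :=
  measurableSet_prec.preimage (measurable_const.prodMk measurable_id)

lemma Measurable.apply_of_measurable_index {α ι β : Type*} [MeasurableSpace α]
    [MeasurableSpace ι] [Countable ι] [MeasurableSingletonClass ι] [MeasurableSpace β]
    {f : α → ι → β} {g : α → ι} (hf : Measurable f) (hg : Measurable g) :
    Measurable fun a => f a (g a) :=
  (measurable_from_prod_countable_left (f := fun x : (ι → β) × ι => x.1 x.2)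
    fun i => measurable_pi_apply i).comp (hf.prodMk hg)

lemma measurable_chainLead (n : ℕ) : Measurable fun q : ℕ → Fin d → ℝ => chainLead q n := by
  induction n with
  | zero => exact measurable_const
  | succ n ih =>
    refine Measurable.ite ?_ measurable_const ih
    exact measurableSet_prec.preimage
      ((measurable_id.apply_of_measurable_index ih).prodMk (measurable_pi_apply (n + 1)))

lemma measurable_chainLeader (n : ℕ) : Measurable fun q : ℕ → Fin d → ℝ => chainLeader q n :=
  measurable_id.apply_of_measurable_index (measurable_chainLead n)

lemma measurable_chainCount (n : ℕ) : Measurable fun q : ℕ → Fin d → ℝ => chainCount q n := by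
  induction n with
  | zero => exact measurable_const
  | succ n ih =>
    simp only [chainCount_succ]
    exact ih.add (Measurable.ite (measurable_chainLead n (measurableSet_singleton n))
      measurable_const measurable_const)

end ChainRecords

section CornerVolume

variable {d : ℕ}

/-- The volume of `{w ∈ [0,1]^d | z ≺ w}`; projecting onto `[0,1]` keeps it in `[0,1]` off the
cube as well. -/
def cornerVolume (z : Fin d → ℝ) : ℝ := ∏ i, (1 - (projIcc (0 : ℝ) 1 zero_le_one (z i) : ℝ))

lemma cornerVolume_nonneg (z : Fin d → ℝ) : 0 ≤ cornerVolume z :=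
  Finset.prod_nonneg fun i _ => sub_nonneg.2 (projIcc 0 1 zero_le_one (z i)).2.2

lemma cornerVolume_le_one (z : Fin d → ℝ) : cornerVolume z ≤ 1 :=
  Finset.prod_le_one (fun i _ => sub_nonneg.2 (projIcc 0 1 zero_le_one (z i)).2.2)
    fun i _ => sub_le_self _ (projIcc 0 1 zero_le_one (z i)).2.1

lemma measurable_cornerVolume : Measurable (cornerVolume (d := d)) :=
  (continuous_finsetProd _ fun i _ => continuous_const.sub
    (continuous_subtype_val.comp (continuous_projIcc.comp (continuous_apply i)))).measurable

lemma measurableSet_cube : MeasurableSet (cube d) :=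
  MeasurableSet.univ_pi fun _ => measurableSet_Icc

lemma unif_cube_eq_pi : unif (cube d) = Measure.pi fun _ => volume.restrict (Icc (0 : ℝ) 1) := by
  have hvol : volume (cube d) = 1 := by rw [cube, volume_pi_pi]; simp
  rw [unif, hvol, inv_one, one_smul, cube, volume_pi, Measure.restrict_pi_pi]

instance isProbabilityMeasure_unif_cube : IsProbabilityMeasure (unif (cube d)) := by
  rw [unif_cube_eq_pi]
  have : IsProbabilityMeasure (volume.restrict (Icc (0 : ℝ) 1)) := ⟨by simp⟩
  infer_instance

lemma integral_unif_cube_prod (g : Fin d → ℝ → ℝ) :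
    ∫ z, ∏ i, g i (z i) ∂unif (cube d) = ∏ i, ∫ t in Icc 0 1, g i t := by
  rw [unif_cube_eq_pi, integral_fintype_prod_eq_prod]

lemma setIntegral_Ioc_one_sub_projIcc_pow {a : ℝ} (ha : a ∈ Icc (0 : ℝ) 1) (r : ℕ) :
    ∫ t in Ioc a 1, (1 - (projIcc (0 : ℝ) 1 zero_le_one t : ℝ)) ^ r =
      (1 - (projIcc (0 : ℝ) 1 zero_le_one a : ℝ)) ^ (r + 1) / (r + 1) := by
  rw [setIntegral_congr_fun measurableSet_Ioc (g := fun t => (1 - t) ^ r)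
    fun t ht => by rw [projIcc_of_mem _ ⟨ha.1.trans ht.1.le, ht.2⟩],
    ← intervalIntegral.integral_of_le ha.2, intervalIntegral.integral_comp_sub_left
    (fun x => x ^ r) 1, integral_pow, sub_self, zero_pow r.succ_ne_zero, projIcc_of_mem _ ha]
  ring

lemma integral_cornerVolume_pow (r : ℕ) :
    ∫ z, cornerVolume z ^ r ∂unif (cube d) = 1 / ((r : ℝ) + 1) ^ d := by
  simp_rw [cornerVolume, ← Finset.prod_pow]
  rw [integral_unif_cube_prod (fun _ t => (1 - (projIcc (0 : ℝ) 1 zero_le_one t : ℝ)) ^ r)]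
  simp_rw [integral_Icc_eq_integral_Ioc,
    setIntegral_Ioc_one_sub_projIcc_pow (left_mem_Icc.2 zero_le_one)]
  simp

lemma setIntegral_prec_cornerVolume_pow {L : Fin d → ℝ} (hL : L ∈ cube d) (r : ℕ) :
    ∫ z in {z | prec L z}, cornerVolume z ^ r ∂unif (cube d) =
      cornerVolume L ^ (r + 1) / ((r : ℝ) + 1) ^ d := by
  have hL' : ∀ i, L i ∈ Icc (0 : ℝ) 1 := fun i => hL i (mem_univ i)
  have hind : {z | prec L z}.indicator (fun z => cornerVolume z ^ r) =
      fun z => ∏ i, (Ioi (L i)).indicator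
        (fun t => (1 - (projIcc (0 : ℝ) 1 zero_le_one t : ℝ)) ^ r) (z i) := by
    ext z
    simp [Set.indicator_apply, Finset.prod_ite_zero, prec, cornerVolume, ← Finset.prod_pow]
  have hIoc : ∀ i, Icc (0 : ℝ) 1 ∩ Ioi (L i) = Ioc (L i) 1 := fun i => by
    ext t
    simp only [mem_inter_iff, mem_Icc, mem_Ioi, mem_Ioc]
    exact ⟨fun h => ⟨h.2, h.1.2⟩, fun h => ⟨⟨(hL' i).1.trans h.1.le, h.2⟩, h.1⟩⟩
  rw [← integral_indicator (measurableSet_setOf_prec L), hind, integral_unif_cube_prod]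
  simp_rw [setIntegral_indicator measurableSet_Ioi, hIoc,
    fun i => setIntegral_Ioc_one_sub_projIcc_pow (hL' i) r, Finset.prod_div_distrib,
    Finset.prod_pow, Finset.prod_const, Finset.card_univ, Fintype.card_fin, cornerVolume]

lemma abs_apply_mul_cornerVolume_pow_le (h : ℕ → ℝ) {k m : ℕ} (hk : k ≤ m)
    (z : Fin d → ℝ) (r : ℕ) : |h k * cornerVolume z ^ r| ≤ ∑ j ∈ Finset.range (m + 1), |h j| := by
  rw [abs_mul, abs_pow, abs_of_nonneg (cornerVolume_nonneg z)]
  calc |h k| * cornerVolume z ^ r ≤ |h k| * 1 := by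
        gcongr
        exact pow_le_one₀ (cornerVolume_nonneg z) (cornerVolume_le_one z)
    _ ≤ ∑ j ∈ Finset.range (m + 1), |h j| := by
        rw [mul_one]
        exact Finset.single_le_sum (fun j _ => abs_nonneg (h j))
          (Finset.mem_range.2 (Nat.lt_succ_of_le hk))

lemma integral_chain_step {L : Fin d → ℝ} (hL : L ∈ cube d) (h : ℕ → ℝ) (y r : ℕ) :
    ∫ z, h (y + if prec L z then 1 else 0) * cornerVolume (if prec L z then z else L) ^ r
        ∂unif (cube d) =
      h (y + 1) * cornerVolume L ^ (r + 1) / ((r : ℝ) + 1) ^ d +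
        h y * (cornerVolume L ^ r - cornerVolume L ^ (r + 1)) := by
  set S := {z : Fin d → ℝ | prec L z}
  have hS : MeasurableSet S := measurableSet_setOf_prec L
  have hvol : (unif (cube d)).real S = cornerVolume L := by
    simpa using setIntegral_prec_cornerVolume_pow hL 0
  have hpw : (fun z => h (y + if prec L z then 1 else 0) *
      cornerVolume (if prec L z then z else L) ^ r) =
      S.piecewise (fun z => h (y + 1) * cornerVolume z ^ r) fun _ => h y * cornerVolume L ^ r := by
    ext z
    by_cases hz : prec L z <;> simp [S, Set.piecewise, hz]
  have hint : Integrable (fun z => h (y + 1) * cornerVolume z ^ r) (unif (cube d)) :=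
    Integrable.of_bound ((measurable_cornerVolume.pow_const r).const_mul _).aestronglyMeasurable _
      (ae_of_all _ fun z => abs_apply_mul_cornerVolume_pow_le (fun _ => h (y + 1)) (le_refl 0) z r)
  rw [hpw, integral_piecewise hS hint.integrableOn (integrable_const _).integrableOn,
    integral_const_mul, setIntegral_prec_cornerVolume_pow hL, setIntegral_const,
    probReal_compl_eq_one_sub hS, hvol, smul_eq_mul]
  ring

end CornerVolume

lemma ProbabilityTheory.IndepFun.integral_comp_eq_integral_integral
    {Ω α β E : Type*} [MeasurableSpace Ω] [MeasurableSpace α] [MeasurableSpace β]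
    [NormedAddCommGroup E] [NormedSpace ℝ E] {P : Measure Ω} [IsProbabilityMeasure P]
    {X : Ω → α} {Z : Ω → β} (hXZ : IndepFun X Z P) (hX : Measurable X) (hZ : Measurable Z)
    {f : α → β → E} (hf : Integrable (Function.uncurry f) ((P.map X).prod (P.map Z))) :
    ∫ ω, f (X ω) (Z ω) ∂P = ∫ ω, ∫ z, f (X ω) z ∂(P.map Z) ∂P := by
  have hmap : P.map (fun ω => (X ω, Z ω)) = (P.map X).prod (P.map Z) :=
    (indepFun_iff_map_prod_eq_prod_map_map hX.aemeasurable hZ.aemeasurable).1 hXZ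
  calc ∫ ω, f (X ω) (Z ω) ∂P
      = ∫ y, Function.uncurry f y ∂(P.map fun ω => (X ω, Z ω)) := by
        rw [integral_map (hX.prodMk hZ).aemeasurable (hmap ▸ hf.aestronglyMeasurable)]
        rfl
    _ = ∫ x, ∫ z, f x z ∂(P.map Z) ∂(P.map X) := by rw [hmap, integral_prod _ hf]; rfl
    _ = ∫ ω, ∫ z, f (X ω) z ∂(P.map Z) ∂P :=
        integral_map hX.aemeasurable hf.integral_prod_left.aestronglyMeasurable

lemma ProbabilityTheory.iIndepFun.indepFun_truncate_succ {Ω β : Type*} [MeasurableSpace Ω]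
    [MeasurableSpace β] [Zero β] {P : Measure Ω} {p : ℕ → Ω → β} (hp : iIndepFun p P)
    (hmeas : ∀ i, Measurable (p i)) (n : ℕ) :
    IndepFun (fun ω i => if i ≤ n then p i ω else 0) (p (n + 1)) P := by
  have h := hp.indepFun_finset (Finset.range (n + 1)) {n + 1} (by simp) hmeas
  have hext : Measurable fun (g : Finset.range (n + 1) → β) (i : ℕ) =>
      if hi : i ∈ Finset.range (n + 1) then g ⟨i, hi⟩ else 0 :=
    measurable_pi_lambda _ fun i => by
      by_cases hi : i ∈ Finset.range (n + 1)
      · simpa [hi] using measurable_pi_apply _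
      · simp [hi]
  convert h.comp hext (measurable_pi_apply ⟨n + 1, Finset.mem_singleton_self _⟩) using 1
  · ext ω i
    simp
  · rfl

lemma ae_mem_cube {Ω : Type*} [MeasurableSpace Ω] {P : Measure Ω} {d : ℕ} {X : Ω → Fin d → ℝ}
    (hX : Measurable X) (hXd : P.map X = unif (cube d)) : ∀ᵐ ω ∂P, X ω ∈ cube d :=
  ae_of_ae_map hX.aemeasurable
    (hXd ▸ Measure.ae_smul_measure (ae_restrict_mem measurableSet_cube) _)

section Transition

variable {d : ℕ} {Ω : Type*} [MeasurableSpace Ω] {P : Measure Ω} [IsProbabilityMeasure P]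
  {p : ℕ → Ω → Fin d → ℝ}

lemma integrable_apply_chainCount_mul_cornerVolume_pow (hmeas : ∀ i, Measurable (p i))
    (h : ℕ → ℝ) (m n r : ℕ) :
    Integrable (fun ω => h (chainCount (p · ω) m) * cornerVolume (chainLeader (p · ω) n) ^ r) P := by
  have hseq : Measurable fun ω i => p i ω := measurable_pi_lambda _ hmeas
  refine Integrable.of_bound ?_ _ (ae_of_all _ fun ω =>
    abs_apply_mul_cornerVolume_pow_le h (chainCount_le _ m) _ r)
  exact ((measurable_from_nat.comp ((measurable_chainCount m).comp hseq)).mul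
    ((measurable_cornerVolume.comp ((measurable_chainLeader n).comp hseq)).pow_const r))
    |>.aestronglyMeasurable

lemma memLp_chainCount (hmeas : ∀ i, Measurable (p i)) (n : ℕ) (q : ENNReal) :
    MemLp (fun ω => (chainCount (p · ω) n : ℝ)) q P :=
  MemLp.of_bound (measurable_from_nat.comp ((measurable_chainCount n).comp
    (measurable_pi_lambda _ hmeas))).aestronglyMeasurable n
    (ae_of_all _ fun ω => by simpa using chainCount_le (p · ω) n)

lemma integral_chainCount_add_two_eq_integral_integral (hmeas : ∀ i, Measurable (p i))
    (hdist : ∀ i, P.map (p i) = unif (cube d)) (hindep : iIndepFun p P) (h : ℕ → ℝ) (n r : ℕ) :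
    ∫ ω, h (chainCount (p · ω) (n + 2)) * cornerVolume (chainLeader (p · ω) (n + 1)) ^ r ∂P =
      ∫ ω, ∫ z, h (chainCount (p · ω) (n + 1) + if prec (chainLeader (p · ω) n) z then 1 else 0) *
        cornerVolume (if prec (chainLeader (p · ω) n) z then z else chainLeader (p · ω) n) ^ r
          ∂unif (cube d) ∂P := by
  -- the state after `n + 1` points depends only on them, and they are independent of `p (n + 1)`
  set X : Ω → ℕ → Fin d → ℝ := fun ω i => if i ≤ n then p i ω else 0
  have hX : Measurable X := measurable_pi_lambda _ fun i => by
    by_cases hi : i ≤ n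
    · simpa [X, hi] using hmeas i
    · simp [X, hi]
  have hcount : ∀ ω, chainCount (X ω) (n + 1) = chainCount (p · ω) (n + 1) :=
    fun ω => chainCount_congr fun i hi => if_pos (Nat.lt_succ_iff.1 hi)
  have hleader : ∀ ω, chainLeader (X ω) n = chainLeader (p · ω) n :=
    fun ω => chainLeader_congr fun i hi => if_pos hi
  let f : (ℕ → Fin d → ℝ) → (Fin d → ℝ) → ℝ := fun x z =>
    h (chainCount x (n + 1) + if prec (chainLeader x n) z then 1 else 0) *
      cornerVolume (if prec (chainLeader x n) z then z else chainLeader x n) ^ r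
  have hprec : MeasurableSet {y : (ℕ → Fin d → ℝ) × (Fin d → ℝ) | prec (chainLeader y.1 n) y.2} :=
    measurableSet_prec.preimage
      (((measurable_chainLeader n).comp measurable_fst).prodMk measurable_snd)
  have hf : Integrable (Function.uncurry f) ((P.map X).prod (P.map (p (n + 1)))) := by
    refine Integrable.of_bound ?_ _ (ae_of_all _ fun y =>
      abs_apply_mul_cornerVolume_pow_le h (m := n + 2) ?_ _ r)
    · exact ((measurable_from_nat.comp (((measurable_chainCount (n + 1)).comp measurable_fst).add
        (Measurable.ite hprec measurable_const measurable_const))).mul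
        ((measurable_cornerVolume.comp (Measurable.ite hprec measurable_snd
          ((measurable_chainLeader n).comp measurable_fst))).pow_const r)).aestronglyMeasurable
    · have := chainCount_le y.1 (n + 1)
      split_ifs <;> omega
  have hstep : ∀ ω, h (chainCount (p · ω) (n + 2)) *
      cornerVolume (chainLeader (p · ω) (n + 1)) ^ r = f (X ω) (p (n + 1) ω) := fun ω => by
    simp only [f, hcount, hleader, chainCount_add_two, chainLeader_succ]
  rw [integral_congr_ae (ae_of_all _ hstep),
    (hindep.indepFun_truncate_succ hmeas n).integral_comp_eq_integral_integral hX (hmeas _) hf,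
    hdist]
  refine integral_congr_ae (ae_of_all _ fun ω => ?_)
  simp only [f]
  rw [hcount, hleader]

lemma integral_chainCount_add_two (hmeas : ∀ i, Measurable (p i))
    (hdist : ∀ i, P.map (p i) = unif (cube d)) (hindep : iIndepFun p P) (h : ℕ → ℝ) (n r : ℕ) :
    ∫ ω, h (chainCount (p · ω) (n + 2)) * cornerVolume (chainLeader (p · ω) (n + 1)) ^ r ∂P =
      (∫ ω, h (chainCount (p · ω) (n + 1) + 1) * cornerVolume (chainLeader (p · ω) n) ^ (r + 1)
          ∂P) / ((r : ℝ) + 1) ^ d +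
        ∫ ω, h (chainCount (p · ω) (n + 1)) * cornerVolume (chainLeader (p · ω) n) ^ r ∂P -
        ∫ ω, h (chainCount (p · ω) (n + 1)) * cornerVolume (chainLeader (p · ω) n) ^ (r + 1) ∂P := by
  have hinner : ∀ᵐ ω ∂P,
      ∫ z, h (chainCount (p · ω) (n + 1) + if prec (chainLeader (p · ω) n) z then 1 else 0) *
        cornerVolume (if prec (chainLeader (p · ω) n) z then z else chainLeader (p · ω) n) ^ r
          ∂unif (cube d) =
      h (chainCount (p · ω) (n + 1) + 1) * cornerVolume (chainLeader (p · ω) n) ^ (r + 1) /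
          ((r : ℝ) + 1) ^ d +
        (h (chainCount (p · ω) (n + 1)) * cornerVolume (chainLeader (p · ω) n) ^ r -
          h (chainCount (p · ω) (n + 1)) * cornerVolume (chainLeader (p · ω) n) ^ (r + 1)) := by
    filter_upwards [ae_all_iff.2 fun i => ae_mem_cube (hmeas i) (hdist i)] with ω hω
    rw [integral_chain_step (L := chainLeader (p · ω) n) (hω _), mul_sub]
  have hint := integrable_apply_chainCount_mul_cornerVolume_pow (P := P) hmeas
  have hint₁ : Integrable (fun ω => h (chainCount (p · ω) (n + 1) + 1) *
      cornerVolume (chainLeader (p · ω) n) ^ (r + 1)) P := hint (fun k => h (k + 1)) _ _ _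
  rw [integral_chainCount_add_two_eq_integral_integral hmeas hdist hindep,
    integral_congr_ae hinner, integral_add, integral_div, integral_sub]
  · ring
  exacts [hint _ _ _ _, hint _ _ _ _, hint₁.div_const _, (hint _ _ _ _).sub (hint _ _ _ _)]

end Transition

section Moments

/- For `n` points in the square: `leaderMoment r n = E[A_n^r]`,
`countLeaderMoment r n = E[Y_n A_n^r]` and `countSecondMoment n = E[Y_n²]`. -/

def leaderMoment (r n : ℕ) : ℝ := 1 / ((r + 1) * (n + r).choose r)

def countLeaderMoment (r n : ℕ) : ℝ :=
  leaderMoment r n * (1 + (genH 1 (n + r) - genH 1 (r + 1)) / 2)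

def countSecondMoment (n : ℕ) : ℝ := (genH 1 n + genH 2 n - 2) / 4 + ((genH 1 n + 1) / 2) ^ 2

lemma genH_succ (a n : ℕ) : genH a (n + 1) = genH a n + 1 / ((n : ℝ) + 1) ^ a := by
  simp [genH, Finset.sum_range_succ]

lemma cast_choose_succ_add (n r : ℕ) :
    ((n + 1 + r).choose r : ℝ) = (n + r + 1) * (n + r).choose r / (n + 1) := by
  have h := Nat.choose_mul_succ_eq (n + r) r
  rw [show n + r + 1 - r = n + 1 by omega] at h
  rw [eq_div_iff (by positivity), show n + 1 + r = n + r + 1 by omega]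
  have := congrArg (Nat.cast (R := ℝ)) h
  push_cast at this
  linarith

lemma cast_choose_succ_succ (n r : ℕ) :
    ((n + r + 1).choose (r + 1) : ℝ) = (n + r + 1) * (n + r).choose r / (r + 1) := by
  have := congrArg (Nat.cast (R := ℝ)) (Nat.add_one_mul_choose_eq (n + r) r)
  push_cast at this
  rw [eq_div_iff (by positivity)]
  linarith

lemma leaderMoment_succ (r n : ℕ) :
    leaderMoment r (n + 1) =
      leaderMoment (r + 1) n / ((r : ℝ) + 1) ^ 2 + leaderMoment r n - leaderMoment (r + 1) n := by
  have hpos : (0 : ℝ) < (n + r).choose r := by exact_mod_cast Nat.choose_pos (by omega)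
  rw [leaderMoment, leaderMoment, leaderMoment, show n + (r + 1) = n + r + 1 by omega,
    cast_choose_succ_add, cast_choose_succ_succ]
  field_simp
  push_cast
  ring

lemma countLeaderMoment_succ (r n : ℕ) :
    countLeaderMoment r (n + 1) =
      (countLeaderMoment (r + 1) n + leaderMoment (r + 1) n) / ((r : ℝ) + 1) ^ 2 +
        countLeaderMoment r n - countLeaderMoment (r + 1) n := by
  have hpos : (0 : ℝ) < (n + r).choose r := by exact_mod_cast Nat.choose_pos (by omega)
  rw [countLeaderMoment, countLeaderMoment, countLeaderMoment, leaderMoment, leaderMoment,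
    leaderMoment, show n + 1 + r = n + r + 1 by omega, show n + (r + 1) = n + r + 1 by omega,
    genH_succ 1 (n + r), genH_succ 1 (r + 1), cast_choose_succ_succ,
    show n + r + 1 = n + 1 + r by omega, cast_choose_succ_add]
  field_simp
  push_cast
  ring

lemma countSecondMoment_succ (n : ℕ) :
    countSecondMoment (n + 1) =
      countSecondMoment n + 2 * countLeaderMoment 1 n + leaderMoment 1 n := by
  have hH2 : genH 1 2 = 3 / 2 := by norm_num [genH, Finset.sum_range_succ]
  rw [countSecondMoment, countSecondMoment, countLeaderMoment, leaderMoment, genH_succ, genH_succ,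
    Nat.choose_one_right, hH2]
  field_simp
  push_cast
  ring

lemma countLeaderMoment_zero (n : ℕ) : countLeaderMoment 0 n = (genH 1 n + 1) / 2 := by
  have hH1 : genH 1 1 = 1 := by norm_num [genH]
  simp [countLeaderMoment, leaderMoment, hH1]
  ring

end Moments

section ChainMoments

variable {Ω : Type*} [MeasurableSpace Ω] {P : Measure Ω} [IsProbabilityMeasure P]
  {p : ℕ → Ω → Fin 2 → ℝ}

lemma integral_cornerVolume_chainLeader_pow (hmeas : ∀ i, Measurable (p i))
    (hdist : ∀ i, P.map (p i) = unif (cube 2)) (hindep : iIndepFun p P) (n r : ℕ) :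
    ∫ ω, cornerVolume (chainLeader (p · ω) n) ^ r ∂P = leaderMoment r (n + 1) := by
  induction n generalizing r with
  | zero =>
    change ∫ ω, cornerVolume (p 0 ω) ^ r ∂P = _
    rw [← integral_map (φ := p 0) (hmeas 0).aemeasurable
      (measurable_cornerVolume.pow_const r).aestronglyMeasurable, hdist,
      integral_cornerVolume_pow, leaderMoment]
    simp [add_comm 1 r, sq]
  | succ n ih =>
    have h := integral_chainCount_add_two hmeas hdist hindep (fun _ => 1) n r
    simp only [one_mul] at h
    rw [h, ih, ih, leaderMoment_succ r (n + 1)]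

lemma integral_chainCount_mul_cornerVolume_pow (hmeas : ∀ i, Measurable (p i))
    (hdist : ∀ i, P.map (p i) = unif (cube 2)) (hindep : iIndepFun p P) (n r : ℕ) :
    ∫ ω, (chainCount (p · ω) (n + 1) : ℝ) * cornerVolume (chainLeader (p · ω) n) ^ r ∂P =
      countLeaderMoment r (n + 1) := by
  induction n generalizing r with
  | zero =>
    simp only [zero_add, chainCount_one, Nat.cast_one, one_mul]
    rw [integral_cornerVolume_chainLeader_pow hmeas hdist hindep, countLeaderMoment,
      add_comm 0 1, add_comm 1 r, sub_self]
    ring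
  | succ n ih =>
    have h := integral_chainCount_add_two hmeas hdist hindep Nat.cast n r
    have hint := integrable_apply_chainCount_mul_cornerVolume_pow (P := P) hmeas
    have hint₁ : Integrable (fun ω => cornerVolume (chainLeader (p · ω) n) ^ (r + 1)) P := by
      simpa using hint (fun _ => 1) 0 n (r + 1)
    simp only [Nat.cast_add, Nat.cast_one, add_mul, one_mul] at h
    rw [h, integral_add (hint Nat.cast _ _ _) hint₁, ih, ih,
      integral_cornerVolume_chainLeader_pow hmeas hdist hindep, countLeaderMoment_succ r (n + 1)]

lemma integral_chainCount_sq (hmeas : ∀ i, Measurable (p i))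
    (hdist : ∀ i, P.map (p i) = unif (cube 2)) (hindep : iIndepFun p P) (n : ℕ) :
    ∫ ω, (chainCount (p · ω) (n + 1) : ℝ) ^ 2 ∂P = countSecondMoment (n + 1) := by
  induction n with
  | zero =>
    simp only [zero_add, chainCount_one]
    norm_num [countSecondMoment, genH]
  | succ n ih =>
    have h := integral_chainCount_add_two hmeas hdist hindep (fun k => (k : ℝ) ^ 2) n 0
    have hint := integrable_apply_chainCount_mul_cornerVolume_pow (P := P) hmeas
    have hA : Integrable (fun ω => cornerVolume (chainLeader (p · ω) n) ^ 1) P := by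
      simpa using hint (fun _ => 1) 0 n 1
    simp only [pow_zero, mul_one, Nat.cast_zero, zero_add, one_pow, div_one] at h
    have hexpand : (fun ω => ((chainCount (p · ω) (n + 1) + 1 : ℕ) : ℝ) ^ 2 *
        cornerVolume (chainLeader (p · ω) n) ^ 1) = fun ω =>
        (chainCount (p · ω) (n + 1) : ℝ) ^ 2 * cornerVolume (chainLeader (p · ω) n) ^ 1 +
          (2 * ((chainCount (p · ω) (n + 1) : ℝ) * cornerVolume (chainLeader (p · ω) n) ^ 1) +
            cornerVolume (chainLeader (p · ω) n) ^ 1) := by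
      ext ω; push_cast; ring
    rw [h, hexpand, integral_add, integral_add, integral_const_mul, ih,
      integral_chainCount_mul_cornerVolume_pow hmeas hdist hindep,
      integral_cornerVolume_chainLeader_pow hmeas hdist hindep, countSecondMoment_succ (n + 1)]
    · ring
    · exact (hint Nat.cast _ _ _).const_mul 2
    · exact hA
    · exact hint (fun k => (k : ℝ) ^ 2) _ _ _
    · exact ((hint Nat.cast _ _ _).const_mul 2).add hA

end ChainMoments

/-- For iud samples from the unit square `[0,1]²`, the number of chain
records has mean `(H_n + 1)/2` and variance `(H_n + H_n^{(2)} - 2)/4`. -/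
theorem chain_records_mean_variance_square
    {Ω : Type*} [MeasurableSpace Ω] (P : Measure Ω) [IsProbabilityMeasure P]
    (p : ℕ → Ω → (Fin 2 → ℝ))
    (hmeas : ∀ n, Measurable (p n))
    (hdist : ∀ n, P.map (p n) = unif (cube 2))
    (hindep : iIndepFun p P) :
    ∀ n : ℕ, 1 ≤ n →
      (∫ ω, (chainCount (fun i => p i ω) n : ℝ) ∂P) = (genH 1 n + 1) / 2 ∧
        variance (fun ω => (chainCount (fun i => p i ω) n : ℝ)) P =
          (genH 1 n + genH 2 n - 2) / 4 := by
  intro n hn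
  obtain ⟨m, rfl⟩ : ∃ m, n = m + 1 := ⟨n - 1, by omega⟩
  have hmean : ∫ ω, (chainCount (p · ω) (m + 1) : ℝ) ∂P = (genH 1 (m + 1) + 1) / 2 := by
    simpa [countLeaderMoment_zero] using
      integral_chainCount_mul_cornerVolume_pow hmeas hdist hindep m 0
  refine ⟨hmean, ?_⟩
  rw [variance_eq_sub (memLp_chainCount hmeas _ 2)]
  simp only [Pi.pow_apply, integral_chainCount_sq hmeas hdist hindep, hmean, countSecondMoment]
  ring
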